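/- Let Γ be a countable group acting on countable sets V and W such that every Γ-orbit in V and every Γ-orbit in W is infinite, and every nonidentity element of Γ fixes at most finitely many points of W. Let B ↷ (X,μ) and C ↷ (Y,ν) be p.m.p. actions of countable groups on standard probability spaces, and consider the associated permutational wreath product actions B≀_V Γ ↷ (X^V, μ^V) and C≀_W Γ ↷ (Y^W, ν^W). Suppose θ: (X^V, μ^V) → (Y^W, ν^W) is a measure-preserving map that is Γ-equivariant (θ(γ·x) = γ·θ(x) for all γ ∈ Γ and a.e. x) and satisfies θ((B≀_V Γ)·x) ⊆ (C≀_W Γ)·θ(x) for a.e. x ∈ X^V. Then θ((⊕_V B)·x) ⊆ (⊕_W C)·θ(x) for a.e. x ∈ X^V. -/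

import Mathlib

/-!  Common definitions: wreath products, measured group actions, orbit equivalence,
measure equivalence, measurable splittings, cocycle superrigidity, and cofinitely
equivariant maps.  -/

open MeasureTheory Function Filter Set
open scoped ENNReal

namespace OEW


/-! ### Restricted direct sums and wreath products of groups -/

/-- The restricted direct sum `⊕_V B`: the subgroup of `V → B` consisting of finitely
supported functions (support = coordinates where the value is not `1`). -/
def dsum (V B : Type) [Group B] : Subgroup (V → B) where
  carrier := {f | (Function.mulSupport f).Finite}
  one_mem' := by
    simp [Function.mulSupport_one]
  mul_mem' := fun {f g} hf hg =>
    Set.Finite.subset (Set.Finite.union hf hg) (Function.mulSupport_mul f g)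
  inv_mem' := fun {f} hf => by simpa [Function.mulSupport_inv] using hf

variable {V B Γ : Type}

/-- The shift of a finitely supported function by `γ`. -/
def shiftSubtype [Group B] [Group Γ] [MulAction Γ V] (γ : Γ) (f : dsum V B) : dsum V B :=
  ⟨fun v => (f : V → B) (γ⁻¹ • v), by
    have h : (Function.mulSupport fun v => (f : V → B) (γ⁻¹ • v)) ⊆
        (fun v => γ⁻¹ • v) ⁻¹' Function.mulSupport (f : V → B) := fun v hv => hv
    exact Set.Finite.subset
      (Set.Finite.preimage ((MulAction.injective (γ⁻¹ : Γ)).injOn) f.2) h⟩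

/-- The shift by `γ` as an automorphism of the restricted direct sum. -/
def shiftEquiv [Group B] [Group Γ] [MulAction Γ V] (γ : Γ) : dsum V B ≃* dsum V B where
  toFun := shiftSubtype γ
  invFun := shiftSubtype γ⁻¹
  left_inv f := Subtype.ext (funext fun v => by simp [shiftSubtype])
  right_inv f := Subtype.ext (funext fun v => by simp [shiftSubtype])
  map_mul' f g := rfl

/-- The left shift action of `Γ` on `⊕_V B` as a homomorphism into the automorphism group. -/
def shiftHom (V B Γ : Type) [Group B] [Group Γ] [MulAction Γ V] :
    Γ →* MulAut (dsum V B) where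
  toFun γ := shiftEquiv γ
  map_one' := MulEquiv.ext fun f => Subtype.ext (funext fun v => by
    simp [shiftEquiv, shiftSubtype])
  map_mul' γ₁ γ₂ := MulEquiv.ext fun f => Subtype.ext (funext fun v => by
    simp [shiftEquiv, shiftSubtype, mul_smul] <;> rfl)

/-- The (restricted) permutational wreath product `B ≀_V Γ = (⊕_V B) ⋊ Γ`. -/
abbrev pwreath (V B Γ : Type) [Group B] [Group Γ] [MulAction Γ V] : Type :=
  SemidirectProduct (dsum V B) Γ (shiftHom V B Γ)

/-- The (restricted) regular wreath product `B ≀ Γ = (⊕_Γ B) ⋊ Γ`. -/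
abbrev wreath (B Γ : Type) [Group B] [Group Γ] : Type := pwreath Γ B Γ


/-- The shift ("generalized Bernoulli") action on `V → X`. -/
def shiftS [Group Γ] [MulAction Γ V] (γ : Γ) (x : V → X) : V → X :=
  fun v => x (γ⁻¹ • v)

variable {V B C Γ X Y Z : Type}

/-- The wreath product action: given an action `β : B → X → X`, the induced action of the
wreath product `B ≀_V Γ` on `V → X`. -/
def wreathSmul [Group B] [Group Γ] [MulAction Γ V] (β : B → X → X)
    (g : pwreath V B Γ) (x : V → X) : V → X :=
  fun v => β ((g.left : V → B) v) (x (g.right⁻¹ • v))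

/-- The coordinatewise action of the restricted direct sum `⊕_V B` on `V → X`. -/
def dsumSmul [Group B] (β : B → X → X) (b : dsum V B) (x : V → X) : V → X :=
  fun v => β ((b : V → B) v) (x v)

/-! ### Measured group actions, given by explicit action maps -/

/-- `a` is a measure preserving group action of `G` on `(X, μ)`. -/
def IsMpAction {G : Type} [Group G] [MeasurableSpace X] (a : G → X → X) (μ : Measure X) : Prop :=
  (∀ x, a 1 x = x) ∧ (∀ g h x, a (g * h) x = a g (a h x)) ∧ ∀ g, MeasurePreserving (a g) μ μ

/-- A probability measure preserving (p.m.p.) action. -/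
def IsPmpAction {G : Type} [Group G] [MeasurableSpace X] (a : G → X → X) (μ : Measure X) : Prop :=
  IsProbabilityMeasure μ ∧ IsMpAction a μ

/-- The action is (essentially) free. -/
def IsFreeAction {G : Type} [Group G] [MeasurableSpace X] (a : G → X → X) (μ : Measure X) : Prop :=
  ∀ᵐ x ∂μ, ∀ g : G, a g x = x → g = 1

/-- The action is ergodic: every invariant measurable set is null or conull. -/
def IsErgodicAction {G : Type} [Group G] [MeasurableSpace X] (a : G → X → X) (μ : Measure X) :
    Prop :=
  ∀ A : Set X, MeasurableSet A → (∀ g : G, a g ⁻¹' A = A) → μ A = 0 ∨ μ Aᶜ = 0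

/-- The action is totally ergodic: every infinite subgroup acts ergodically. -/
def IsTotallyErgodic {G : Type} [Group G] [MeasurableSpace X] (a : G → X → X) (μ : Measure X) :
    Prop :=
  ∀ H : Subgroup G, (H : Set G).Infinite → IsErgodicAction (fun (h : H) x => a (h : G) x) μ

/-- `φ` is a measure space isomorphism from `(X,μ)` to `(Y,ν)`: a measure preserving
measurable map admitting an a.e. two-sided measurable inverse. -/
def IsMeasureIso [MeasurableSpace X] [MeasurableSpace Y] (μ : Measure X) (ν : Measure Y)
    (φ : X → Y) : Prop :=
  MeasurePreserving φ μ ν ∧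
    ∃ ψ : Y → X, Measurable ψ ∧ (∀ᵐ x ∂μ, ψ (φ x) = x) ∧ (∀ᵐ y ∂ν, φ (ψ y) = y)

/-- `φ` is an orbit equivalence between the actions `a : G → X → X` and `b : H → Y → Y`:
a measure space isomorphism with `φ(G⬝x) = H⬝φ(x)` for a.e. `x`. -/
def IsOrbitEquivalence {G H : Type} [MeasurableSpace X] [MeasurableSpace Y]
    (a : G → X → X) (b : H → Y → Y) (μ : Measure X) (ν : Measure Y) (φ : X → Y) : Prop :=
  IsMeasureIso μ ν φ ∧
    ∀ᵐ x ∂μ, (∀ g : G, ∃ h : H, φ (a g x) = b h (φ x)) ∧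
      (∀ h : H, ∃ g : G, b h (φ x) = φ (a g x))

/-- The two actions are orbit equivalent. -/
def OrbitEquivalentActions {G H : Type} [MeasurableSpace X] [MeasurableSpace Y]
    (a : G → X → X) (b : H → Y → Y) (μ : Measure X) (ν : Measure Y) : Prop :=
  ∃ φ : X → Y, IsOrbitEquivalence a b μ ν φ

/-- `m` is the product, over the index set `ι`, of copies of the probability measure `ν`. -/
def IsProductMeasure {ι : Type} [MeasurableSpace X] (ν : Measure X) (m : Measure (ι → X)) :
    Prop :=
  IsProbabilityMeasure m ∧
    ∀ (s : Finset ι) (A : ι → Set X), (∀ i, MeasurableSet (A i)) →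
      m {x | ∀ i ∈ s, x i ∈ A i} = ∏ i ∈ s, ν (A i)

/-- A group is amenable if it admits a left translation invariant, finitely additive
probability measure defined on all of its subsets. -/
def IsAmenable (G : Type) [Group G] : Prop :=
  ∃ m : Set G → ℝ,
    (∀ A : Set G, 0 ≤ m A) ∧ m Set.univ = 1 ∧
    (∀ A B : Set G, Disjoint A B → m (A ∪ B) = m A + m B) ∧
    ∀ (g : G) (A : Set G), m ((g * ·) '' A) = m A

/-! ### Bundled p.m.p. actions on standard probability spaces -/

/-- A p.m.p. action of `G` on a standard probability space, bundled. -/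
structure PmpSystem (G : Type) [Group G] : Type 1 where
  (X : Type)
  [mX : MeasurableSpace X]
  (μ : Measure X)
  (act : G → X → X)
  (standardBorel : StandardBorelSpace X)
  (isProb : IsProbabilityMeasure μ)
  (pmp : IsMpAction act μ)

/-- The bundled action is (essentially) free. -/
def PmpSystem.Free {G : Type} [Group G] (S : PmpSystem G) : Prop :=
  ∀ᵐ x ∂S.μ, ∀ g : G, S.act g x = x → g = 1

/-- The bundled action is ergodic. -/
def PmpSystem.ErgodicAct {G : Type} [Group G] (S : PmpSystem G) : Prop :=
  ∀ A : Set S.X, MeasurableSet[S.mX] A → (∀ g : G, S.act g ⁻¹' A = A) → S.μ A = 0 ∨ S.μ Aᶜ = 0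

/-- Two countable groups are orbit equivalent if they admit orbit equivalent free ergodic
p.m.p. actions on standard probability spaces. -/
def GroupsOrbitEquivalent (G H : Type) [Group G] [Group H] : Prop :=
  ∃ (S : PmpSystem G) (T : PmpSystem H),
    letI := S.mX
    letI := T.mX
    S.Free ∧ T.Free ∧ S.ErgodicAct ∧ T.ErgodicAct ∧
      OrbitEquivalentActions S.act T.act S.μ T.μ

/-! ### Measure equivalence -/

/-- `s` is a measurable fundamental domain for the action `a` on `(Ω, m)`. -/
def IsFundDomain {G Ω : Type} [MeasurableSpace Ω] (a : G → Ω → Ω) (s : Set Ω)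
    (m : Measure Ω) : Prop :=
  MeasurableSet s ∧ (∀ᵐ x ∂m, ∃ g : G, a g x ∈ s) ∧
    ∀ g g' : G, g ≠ g' → m (a g '' s ∩ a g' '' s) = 0

/-- A measure equivalence coupling of `G` with `H`: commuting measure preserving actions on
a standard nonzero σ-finite measure space, each admitting a finite measure measurable
fundamental domain. -/
structure MECoupling (G H : Type) [Group G] [Group H] : Type 1 where
  (Ω : Type)
  [mΩ : MeasurableSpace Ω]
  (m : Measure Ω)
  (aG : G → Ω → Ω)
  (aH : H → Ω → Ω)
  (standardBorel : StandardBorelSpace Ω)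
  (sigmaFinite : SigmaFinite m)
  (nonzero : m ≠ 0)
  (mpG : IsMpAction aG m)
  (mpH : IsMpAction aH m)
  (comm : ∀ (g : G) (h : H) (x : Ω), aG g (aH h x) = aH h (aG g x))
  (FG : Set Ω)
  (FH : Set Ω)
  (fundG : IsFundDomain aG FG m)
  (fundH : IsFundDomain aH FH m)
  (finG : m FG < ⊤)
  (finH : m FH < ⊤)

/-- `G` and `H` are measure equivalent. -/
def MeasureEquivalent (G H : Type) [Group G] [Group H] : Prop :=
  Nonempty (MECoupling G H)

/-- `G` and `H` admit a measure equivalence coupling of coupling index `α`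
(the ratio of the measures of the `H`- and `G`-fundamental domains). -/
def MeasureEquivalentWithIndex (G H : Type) [Group G] [Group H] (α : ℝ≥0∞) : Prop :=
  ∃ c : MECoupling G H, c.m c.FH = α * c.m c.FG



variable {X : Type}

/-! ### Countable Borel equivalence relations and measurable splittings -/

/-- `R` is a p.m.p. countable Borel equivalence relation on `(X, μ)`: every Borel bijection
between Borel subsets whose graph is contained in `R` preserves `μ`. -/
def IsPmpCBER [MeasurableSpace X] (R : X → X → Prop) (μ : Measure X) : Prop :=
  Equivalence R ∧ MeasurableSet {p : X × X | R p.1 p.2} ∧ (∀ x, {y | R x y}.Countable) ∧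
    ∀ (f : X → X) (A B : Set X), Measurable f → MeasurableSet A → MeasurableSet B →
      Set.BijOn f A B → (∀ x ∈ A, R x (f x)) →
      ∀ C : Set X, MeasurableSet C → C ⊆ B → μ (A ∩ f ⁻¹' C) = μ C

/-- The relation `R` is ergodic with respect to `μ`. -/
def IsErgodicRel [MeasurableSpace X] (R : X → X → Prop) (μ : Measure X) : Prop :=
  ∀ A : Set X, MeasurableSet A → (∀ x y, R x y → (x ∈ A ↔ y ∈ A)) → μ A = 0 ∨ μ Aᶜ = 0

/-- The subrelations `R₀` and `R₁` are freely independent: there is no reduced cycle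
alternating between nontrivial `R₀`-steps and `R₁`-steps. -/
def FreelyIndepRel (R₀ R₁ : X → X → Prop) : Prop :=
  ¬ ∃ (n : ℕ) (i : ℕ → Fin 2) (x : ℕ → X),
      2 ≤ n ∧ x n = x 0 ∧ (∀ j < n, x j ≠ x (j + 1)) ∧
      (∀ j, j + 1 < n → i j ≠ i (j + 1)) ∧
      (∀ j < n, if i j = 0 then R₀ (x j) (x (j + 1)) else R₁ (x j) (x (j + 1)))

/-- `R` splits as the free product `R = R₀ ∗ R₁`: `R₀` and `R₁` are freely independent
subequivalence relations generating `R`. -/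
def SplitsAs (R R₀ R₁ : X → X → Prop) : Prop :=
  Equivalence R₀ ∧ Equivalence R₁ ∧ (∀ x y, R₀ x y → R x y) ∧ (∀ x y, R₁ x y → R x y) ∧
    FreelyIndepRel R₀ R₁ ∧
    ∀ x y, R x y ↔ Relation.EqvGen (fun u v => R₀ u v ∨ R₁ u v) x y

/-- The splitting `R = R₀ ∗ R₁` is inessential on the (invariant) set `C`. -/
def InessentialOn [MeasurableSpace X] (R R₀ R₁ : X → X → Prop) (C : Set X) : Prop :=
  ∃ X₀ X₁ : Set X, MeasurableSet X₀ ∧ MeasurableSet X₁ ∧ X₀ ∪ X₁ = C ∧ Disjoint X₀ X₁ ∧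
    (∀ x ∈ C, ∀ y ∈ C, R x y → (x ∈ X₀ ↔ y ∈ X₀)) ∧
    ∃ U₀ U₁ : Set X, MeasurableSet U₀ ∧ MeasurableSet U₁ ∧ U₀ ⊆ X₀ ∧ U₁ ⊆ X₁ ∧
      (∀ x ∈ X₀, ∃ y ∈ U₀, R x y) ∧ (∀ x ∈ X₁, ∃ y ∈ U₁, R x y) ∧
      (∀ x ∈ U₀, ∀ y ∈ U₀, (R x y ↔ R₀ x y)) ∧ (∀ x ∈ U₁, ∀ y ∈ U₁, (R x y ↔ R₁ x y))

/-- The splitting is `μ`-essential: there is no `R`-invariant `μ`-conull Borel set on which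
it is inessential. -/
def MuEssential [MeasurableSpace X] (μ : Measure X) (R R₀ R₁ : X → X → Prop) : Prop :=
  ¬ ∃ C : Set X, MeasurableSet C ∧ μ Cᶜ = 0 ∧ (∀ x y, R x y → (x ∈ C ↔ y ∈ C)) ∧
      InessentialOn R R₀ R₁ C

/-- `R = R₀ ∗ R₁` is a `μ`-essential splitting. -/
def EssentialSplitting [MeasurableSpace X] (μ : Measure X) (R R₀ R₁ : X → X → Prop) : Prop :=
  SplitsAs R R₀ R₁ ∧ MuEssential μ R R₀ R₁

/-- The orbit equivalence relation of an action given by `a`. -/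
def orbitRelOf {G : Type} (a : G → X → X) : X → X → Prop := fun x y => ∃ g : G, a g x = y

/-- The restriction of the relation `R` to the set `C` (extended by equality off `C`). -/
def restrictRel (R : X → X → Prop) (C : Set X) : X → X → Prop :=
  fun x y => x = y ∨ (R x y ∧ x ∈ C ∧ y ∈ C)

/-- `R` is hyperfinite: an increasing union of Borel equivalence relations with finite
classes. -/
def IsHyperfinite [MeasurableSpace X] (R : X → X → Prop) : Prop :=
  ∃ S : ℕ → X → X → Prop,
    (∀ n, Equivalence (S n)) ∧ (∀ n, MeasurableSet {p : X × X | S n p.1 p.2}) ∧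
    (∀ n x y, S n x y → S (n + 1) x y) ∧ (∀ n x, {y | S n x y}.Finite) ∧
    ∀ x y, R x y ↔ ∃ n, S n x y

/-- `R` is `μ`-amenable: off a `μ`-null set it is hyperfinite. -/
def MuAmenableRel [MeasurableSpace X] (R : X → X → Prop) (μ : Measure X) : Prop :=
  ∃ C : Set X, MeasurableSet C ∧ μ Cᶜ = 0 ∧ IsHyperfinite (restrictRel R C)

/-- `R` is `μ`-nowhere amenable: there is no positive measure Borel set on which the
restriction of `R` is amenable. -/
def MuNowhereAmenable [MeasurableSpace X] (R : X → X → Prop) (μ : Measure X) : Prop :=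
  ¬ ∃ A : Set X, MeasurableSet A ∧ 0 < μ A ∧
      ∃ C : Set X, MeasurableSet C ∧ C ⊆ A ∧ μ (A \ C) = 0 ∧
        IsHyperfinite (restrictRel R C)

/-- The symmetric irreflexive graph `E` has no cycles. -/
def HasNoGraphCycles (E : X → X → Prop) : Prop :=
  ¬ ∃ (n : ℕ) (x : ℕ → X), 3 ≤ n ∧ (∀ j < n, E (x j) (x (j + 1))) ∧ x n = x 0 ∧
      ∀ j < n, ∀ k < n, j ≠ k → x j ≠ x k

/-- `R` is treeable: it is generated by a Borel graphing whose connected components are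
acyclic. -/
def IsTreeable [MeasurableSpace X] (R : X → X → Prop) : Prop :=
  ∃ E : X → X → Prop,
    MeasurableSet {p : X × X | E p.1 p.2} ∧ (∀ x y, E x y → E y x) ∧ (∀ x, ¬ E x x) ∧
    (∀ x y, E x y → R x y) ∧ (∀ x y, R x y ↔ Relation.EqvGen E x y) ∧ HasNoGraphCycles E


/-- `Γ` admits an essential measurable splitting: some free p.m.p. action of `Γ` on a
standard probability space has orbit equivalence relation admitting a `μ`-essential
splitting (into Borel subequivalence relations). -/
def AdmitsEssentialMeasurableSplitting (Γ : Type) [Group Γ] : Prop :=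
  ∃ S : PmpSystem Γ, S.Free ∧
    ∃ R₀ R₁ : S.X → S.X → Prop,
      letI := S.mX
      MeasurableSet {p : S.X × S.X | R₀ p.1 p.2} ∧
      MeasurableSet {p : S.X × S.X | R₁ p.1 p.2} ∧
      EssentialSplitting S.μ (orbitRelOf S.act) R₀ R₁


variable {X Y Z : Type}

/-! ### Cocycles and superrigidity -/

/-- A measurable `L`-valued cocycle over the action `a`. -/
def IsCocycle {G L : Type} [Group G] [MeasurableSpace X] [Group L] [MeasurableSpace L]
    (a : G → X → X) (μ : Measure X) (c : G → X → L) : Prop :=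
  (∀ g : G, Measurable (c g)) ∧
    ∀ g h : G, ∀ᵐ x ∂μ, c (g * h) x = c g (a h x) * c h x

/-- Two cocycles are cohomologous. -/
def Cohomologous {G L : Type} [Group G] [MeasurableSpace X] [Group L] [MeasurableSpace L]
    (a : G → X → X) (μ : Measure X) (c₀ c₁ : G → X → L) : Prop :=
  ∃ f : X → L, Measurable f ∧ ∀ g : G, ∀ᵐ x ∂μ, f (a g x) * c₀ g x * (f x)⁻¹ = c₁ g x

/-- The action `a` is `L`-cocycle superrigid: every measurable `L`-valued cocycle is
cohomologous to a group homomorphism. -/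
def IsCocycleSuperrigid {G : Type} [Group G] [MeasurableSpace X]
    (L : Type) [Group L] [MeasurableSpace L] (a : G → X → X) (μ : Measure X) : Prop :=
  ∀ c : G → X → L, IsCocycle a μ c →
    ∃ ρ : G →* L, Cohomologous a μ c fun g _ => ρ g

/-- The action is `𝒢_ctble`-cocycle superrigid: `L`-cocycle superrigid for every countable
discrete group `L`. -/
def IsGctbleCocycleSuperrigid {G : Type} [Group G] [MeasurableSpace X]
    (a : G → X → X) (μ : Measure X) : Prop :=
  ∀ (L : Type) [Group L] [MeasurableSpace L] [MeasurableSingletonClass L],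
    Countable L → IsCocycleSuperrigid L a μ

/-- The action is strongly ergodic. -/
def IsStronglyErgodic {G : Type} [Group G] [MeasurableSpace X]
    (a : G → X → X) (μ : Measure X) : Prop :=
  ∀ A : ℕ → Set X, (∀ n, MeasurableSet (A n)) →
    (∀ g : G, Tendsto (fun n => μ (symmDiff (a g '' A n) (A n))) atTop (nhds 0)) →
    Tendsto (fun n => μ (A n) * μ (A n)ᶜ) atTop (nhds 0)

/-- Soficity of a group. -/
def IsSofic (G : Type) [Group G] : Prop :=
  ∀ (F : Finset G) (ε : ℝ), 0 < ε →
    ∃ (n : ℕ) (σ : G → Equiv.Perm (Fin n)),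
      (∀ g ∈ F, ∀ h ∈ F,
        (1 - ε) * n ≤ ((Finset.univ.filter fun i => σ (g * h) i = σ g (σ h i)).card : ℝ)) ∧
      ∀ g ∈ F, g ≠ 1 →
        (1 - ε) * n ≤ ((Finset.univ.filter fun i => σ g i ≠ i).card : ℝ)

/-! ### Internal free products -/

/-- `Γ` is the internal free product of its subgroups `Λ` and `H`: together they generate
`Γ` and no alternating product of nonidentity elements is the identity. -/
def IsInternalFreeProduct {Γ : Type} [Group Γ] (Λ H : Subgroup Γ) : Prop :=
  Λ ⊔ H = ⊤ ∧
    ∀ (n : ℕ) (w : Fin (n + 1) → Γ) (c : Fin (n + 1) → Bool),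
      (∀ i, w i ≠ 1) →
      (∀ i, if c i then w i ∈ Λ else w i ∈ H) →
      (∀ i : Fin n, c i.castSucc ≠ c i.succ) →
      (List.ofFn w).prod ≠ 1





/-! ### Cofinitely equivariant maps -/

/-- `x ∼_B y`: the functions differ in finitely many coordinates, and wherever they differ
the values lie in the same `B`-orbit. -/
def simRel (β : B → Y → Y) (x y : Γ → Y) : Prop :=
  {γ : Γ | x γ ≠ y γ}.Finite ∧ ∀ γ : Γ, x γ ≠ y γ → ∃ l : B, β l (x γ) = y γ

/-- `φ` is cofinitely equivariant with respect to the given actions of `B` and `C`. -/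
def CofinitelyEquivariant [Group Γ] [MeasurableSpace Y] (β : B → Y → Y) (χ : C → Z → Z)
    (νΓ : Measure (Γ → Y)) (φ : (Γ → Y) → (Γ → Z)) : Prop :=
  ∀ᵐ y ∂νΓ, ∀ x : Γ → Y, simRel β x y → ∀ γ : Γ,
    simRel χ (φ (shiftS γ x)) (shiftS γ (φ y))

/-- `φ` (with a.e. inverse `ψ`) is a bi-cofinitely equivariant measure space isomorphism. -/
def BiCofinitelyEquivariant [Group Γ] [MeasurableSpace Y] [MeasurableSpace Z]
    (β : B → Y → Y) (χ : C → Z → Z) (νΓ : Measure (Γ → Y)) (ηΓ : Measure (Γ → Z))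
    (φ : (Γ → Y) → (Γ → Z)) (ψ : (Γ → Z) → (Γ → Y)) : Prop :=
  MeasurePreserving φ νΓ ηΓ ∧ Measurable ψ ∧
    (∀ᵐ y ∂νΓ, ψ (φ y) = y) ∧ (∀ᵐ z ∂ηΓ, φ (ψ z) = z) ∧
    CofinitelyEquivariant β χ νΓ φ ∧ CofinitelyEquivariant χ β ηΓ ψ

/-! ### Stable orbit equivalence -/

/-- The actions `a` and `b` are stably orbit equivalent. -/
def StablyOrbitEquivalent {G H : Type} [MeasurableSpace X] [MeasurableSpace Y]
    (a : G → X → X) (b : H → Y → Y) (μ : Measure X) (ν : Measure Y) : Prop :=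
  ∃ (X₀ : Set X) (Y₀ : Set Y) (φ : X → Y),
    MeasurableSet X₀ ∧ MeasurableSet Y₀ ∧ 0 < μ X₀ ∧ 0 < ν Y₀ ∧
    (∀ᵐ x ∂μ.restrict X₀, φ x ∈ Y₀) ∧
    MeasurePreserving φ ((μ X₀)⁻¹ • μ.restrict X₀) ((ν Y₀)⁻¹ • ν.restrict Y₀) ∧
    (∃ ψ : Y → X, Measurable ψ ∧ (∀ᵐ x ∂μ.restrict X₀, ψ (φ x) = x) ∧
      (∀ᵐ y ∂ν.restrict Y₀, φ (ψ y) = y)) ∧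
    ∀ᵐ x ∂μ.restrict X₀,
      (∀ g : G, a g x ∈ X₀ → ∃ h : H, φ (a g x) = b h (φ x)) ∧
      (∀ h : H, b h (φ x) ∈ Y₀ → ∃ g : G, a g x ∈ X₀ ∧ φ (a g x) = b h (φ x))


/-
Fix `d ∈ ⊕_V B` and write `θ (d • x) = (e, γ) • θ x` with `(e, γ) ∈ C ≀_W Γ`. If `γ ≠ 1`, then
`θ (d • x)_w = θ (x)_{γ⁻¹ w}` for all `w` outside the finite support of `e`; seen through a set
`A` with `0 < ν A < 1`, this is a null event. Indeed, approximate `{x | θ (x)_{w₀} ∈ A}` by a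
cylinder over a finite `F ⊆ V`. Neumann's lemma on coset covers yields, for every `k`, points
`u₁, …, u_k` of the form `g • w₀` with `g • F` disjoint from the support of `d`, such that the
`2k` points `uᵢ, γ⁻¹ uᵢ` are distinct. At each `uᵢ`, `θ (d • x)` and `θ x` almost agree through
`A`, while the events `θ (x)_{uᵢ} ∈ A ↔ θ (x)_{γ⁻¹ uᵢ} ∈ A` are independent of probability
`r < 1`; so the bad event has measure at most `r ^ k`. If `ν` only takes the values `0` and `1`,
it is a Dirac mass, `θ` is a.e. constant and `e = 1` works.
-/

open scoped symmDiff

section WreathAction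

variable [Group B] {β : B → X → X}

theorem dsum.finite_mulSupport (d : dsum V B) : (Function.mulSupport (d : V → B)).Finite :=
  d.2

instance dsum.instCountable [Countable V] [Countable B] : Countable (dsum V B) := by
  have : Countable (Additive B) := ‹Countable B›
  refine Function.Injective.countable (f := fun f : dsum V B =>
      Finsupp.ofSupportFinite (fun v => Additive.ofMul ((f : V → B) v)) f.2) fun f g h => ?_
  ext v
  exact Additive.ofMul.injective (DFunLike.congr_fun h v)

theorem dsumSmul_apply_of_notMem (hβ : ∀ x, β 1 x = x) {d : dsum V B} {v : V}
    (hv : v ∉ Function.mulSupport (d : V → B)) (x : V → X) : dsumSmul β d x v = x v := by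
  rw [dsumSmul, Function.notMem_mulSupport.1 hv, hβ]

theorem dsumSmul_one (hβ : ∀ x, β 1 x = x) (x : V → X) : dsumSmul β 1 x = x :=
  funext fun _ => hβ _

variable [Group Γ] [MulAction Γ V]

theorem wreathSmul_inl (d : dsum V B) (x : V → X) :
    wreathSmul β (SemidirectProduct.inl d : pwreath V B Γ) x = dsumSmul β d x := by
  funext v
  simp [wreathSmul, dsumSmul]

theorem wreathSmul_of_right_eq_one {g : pwreath V B Γ} (hg : g.right = 1) (x : V → X) :
    wreathSmul β g x = dsumSmul β g.left x := by
  funext v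
  simp [wreathSmul, dsumSmul, hg]

theorem wreathSmul_apply_of_notMem (hβ : ∀ x, β 1 x = x) {g : pwreath V B Γ} {v : V}
    (hv : v ∉ Function.mulSupport (g.left : V → B)) (x : V → X) :
    wreathSmul β g x v = x (g.right⁻¹ • v) := by
  rw [wreathSmul, Function.notMem_mulSupport.1 hv, hβ]

end WreathAction

section ProductMeasure

open Measure

variable [MeasurableSpace X] {μ : Measure X} [IsProbabilityMeasure μ]

theorem IsProductMeasure.eq_infinitePi {m : Measure (V → X)} (hm : IsProductMeasure μ m) :
    m = infinitePi fun _ => μ :=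
  Measure.eq_infinitePi _ fun s t ht => hm.2 s t ht

theorem measurePreserving_shiftS [Group Γ] [MulAction Γ V] (γ : Γ) :
    MeasurePreserving (shiftS γ : (V → X) → (V → X))
      (infinitePi fun _ => μ) (infinitePi fun _ => μ) :=
  ⟨by unfold shiftS; fun_prop, map_infinitePi_infinitePi_of_inj (MulAction.injective γ⁻¹)⟩

theorem measurePreserving_dsumSmul [Group B] {β : B → X → X}
    (hβ : ∀ g, MeasurePreserving (β g) μ μ) (d : dsum V B) :
    MeasurePreserving (dsumSmul β d) (infinitePi fun _ => μ) (infinitePi fun _ => μ) := by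
  have hmeas : ∀ v, Measurable (β ((d : V → B) v)) := fun v => (hβ _).measurable
  refine ⟨measurable_pi_lambda _ fun v => (hmeas v).comp (measurable_pi_apply v), ?_⟩
  unfold dsumSmul
  rw [infinitePi_map_pi _ hmeas]
  exact congrArg _ (funext fun v => (hβ _).map_eq)

variable {W : Type}

theorem infinitePi_setOf_forall_mem_iff_mem [DecidableEq W] {U : Finset W} {σ : W → W}
    (hσ : Function.Injective σ) (hU : Disjoint U (U.image σ)) {A : Set X}
    (hA : MeasurableSet A) :
    infinitePi (fun _ : W => μ) {y | ∀ u ∈ U, y u ∈ A ↔ y (σ u) ∈ A} =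
      infinitePi (fun _ : Bool => μ) {z | z true ∈ A ↔ z false ∈ A} ^ U.card := by
  let π : U × Bool → W := fun p => cond p.2 p.1 (σ p.1)
  have hπ : Function.Injective π := by
    rintro ⟨u, _ | _⟩ ⟨u', _ | _⟩ h <;> simp only [π, cond_true, cond_false] at h
    · rw [Subtype.ext (hσ h)]
    · exact absurd (Finset.mem_image_of_mem σ u.2) (Finset.disjoint_left.mp hU (h ▸ u'.2))
    · exact absurd (Finset.mem_image_of_mem σ u'.2) (Finset.disjoint_left.mp hU (h ▸ u.2))
    · rw [Subtype.ext h]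
  have hΦ : MeasurePreserving (fun (y : W → X) (u : U) (b : Bool) => y (π (u, b)))
      (infinitePi fun _ => μ) (infinitePi fun _ : U => infinitePi fun _ : Bool => μ) := by
    refine ⟨by fun_prop, ?_⟩
    have : (fun (y : W → X) (u : U) (b : Bool) => y (π (u, b))) =
        MeasurableEquiv.curry U Bool X ∘ fun y p => y (π p) := rfl
    rw [this, ← map_map (by fun_prop) (by fun_prop), map_infinitePi_infinitePi_of_inj hπ]
    exact infinitePi_map_curry (fun _ _ => μ)
  have hE : MeasurableSet {z : Bool → X | z true ∈ A ↔ z false ∈ A} :=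
    Measurable.setOf (by fun_prop)
  have hpre : {y : W → X | ∀ u ∈ U, y u ∈ A ↔ y (σ u) ∈ A} =
      (fun (y : W → X) (u : U) (b : Bool) => y (π (u, b))) ⁻¹'
        Set.pi Set.univ fun _ => {z | z true ∈ A ↔ z false ∈ A} := by
    ext y
    simp [π]
  rw [hpre, hΦ.measure_preimage (MeasurableSet.univ_pi fun _ => hE).nullMeasurableSet,
    ← Finset.coe_univ, infinitePi_pi _ fun _ _ => hE, Finset.prod_const, Finset.card_univ,
    Fintype.card_coe]

theorem infinitePi_setOf_iff_mem_lt_one {A : Set X} (hA : MeasurableSet A) (hA₀ : μ A ≠ 0)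
    (hA₁ : μ Aᶜ ≠ 0) : infinitePi (fun _ : Bool => μ) {z | z true ∈ A ↔ z false ∈ A} < 1 := by
  have hbox : Set.pi (Finset.univ : Finset Bool) (fun b => cond b A Aᶜ) ⊆
      {z : Bool → X | z true ∈ A ↔ z false ∈ A}ᶜ := by
    intro z hz
    have h1 := hz true (by simp)
    have h2 := hz false (by simp)
    simp_all
  have hpos : infinitePi (fun _ : Bool => μ) {z : Bool → X | z true ∈ A ↔ z false ∈ A}ᶜ ≠ 0 := by
    refine ne_of_gt (lt_of_lt_of_le ?_ (measure_mono hbox))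
    rw [infinitePi_pi _ fun b _ => by cases b <;> simp [hA, hA.compl]]
    simp [hA₀, hA₁, pos_iff_ne_zero]
  refine lt_of_le_of_ne prob_le_one fun h => hpos ?_
  rwa [prob_compl_eq_zero_iff (Measurable.setOf (by fun_prop))]

theorem ae_comp_eq_of_isZeroOneMeasure {α : Type} [MeasurableSpace α] [Countable W]
    [StandardBorelSpace X] [IsZeroOneMeasure μ] {m : Measure α} {θ : α → (W → X)}
    (hθ : MeasurePreserving θ m (infinitePi fun _ => μ)) {T : α → α}
    (hT : MeasurePreserving T m m) : θ ∘ T =ᵐ[m] θ := by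
  obtain ⟨x₀, rfl⟩ := IsZeroOneMeasure.exists_eq_dirac (μ := μ)
  rw [infinitePi_dirac] at hθ
  have hconst : θ =ᵐ[m] fun _ _ => x₀ := ae_of_ae_map (p := fun y => y = fun _ => x₀)
    hθ.measurable.aemeasurable (by rw [hθ.map_eq, ae_dirac_eq]; rfl)
  filter_upwards [ae_eq_comp hT.measurable.aemeasurable (hT.map_eq ▸ hconst), hconst]
    with a hTa ha
  exact hTa.trans ha.symm

end ProductMeasure

section Avoidance

open scoped Pointwise

variable [Group Γ]

theorem exists_smul_notMem_of_orbit_infinite {α : Type*} [MulAction Γ α] {P S : Set α}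
    (hP : P.Finite) (hS : S.Finite) (hinf : ∀ p ∈ P, (MulAction.orbit Γ p).Infinite) :
    ∃ g : Γ, ∀ p ∈ P, g • p ∉ S := by
  by_contra! hcover
  have := hP.to_subtype
  have := hS.to_subtype
  -- `g • p = s` pins `g` down to the coset `g₀ • stabilizer p` of any `g₀` with `g₀ • p = s`
  let I := {q : P × S // ∃ g : Γ, g • (q.1 : α) = q.2}
  have : Fintype I := Fintype.ofFinite I
  let g₀ : I → Γ := fun q => q.2.choose
  have hcovers : ⋃ q ∈ (Finset.univ : Finset I),
      g₀ q • (MulAction.stabilizer Γ (q.1.1 : α) : Set Γ) = Set.univ := by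
    refine Set.eq_univ_of_forall fun g => ?_
    obtain ⟨p, hp, hgp⟩ := hcover g
    let q : I := ⟨(⟨p, hp⟩, ⟨g • p, hgp⟩), g, rfl⟩
    refine Set.mem_biUnion (Finset.mem_coe.2 (Finset.mem_univ q)) (mem_leftCoset_iff _ |>.2 ?_)
    rw [SetLike.mem_coe, MulAction.mem_stabilizer_iff, mul_smul, inv_smul_eq_iff]
    exact q.2.choose_spec.symm
  obtain ⟨q, -, hq⟩ := Subgroup.exists_finiteIndex_of_leftCoset_cover hcovers
  refine hinf _ q.1.1.2 (Set.finite_of_ncard_ne_zero ?_)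
  rw [← MulAction.index_stabilizer]
  exact hq.index_ne_zero

theorem exists_smul_forall_notMem_and_smul_notMem {W : Type} [MulAction Γ V] [MulAction Γ W]
    (hV : ∀ v : V, (MulAction.orbit Γ v).Infinite)
    (hW : ∀ w : W, (MulAction.orbit Γ w).Infinite) (F D : Finset V) (w₀ : W) (S : Finset W) :
    ∃ g : Γ, (∀ f ∈ F, g • f ∉ D) ∧ g • w₀ ∉ S := by
  have horbit : ∀ p : V ⊕ W, (MulAction.orbit Γ p).Infinite := by
    rintro (v | w)
    · rw [show MulAction.orbit Γ (.inl v : V ⊕ W) = .inl '' MulAction.orbit Γ v from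
        Set.range_comp _ _]
      exact (hV v).image Sum.inl_injective.injOn
    · rw [show MulAction.orbit Γ (.inr w : V ⊕ W) = .inr '' MulAction.orbit Γ w from
        Set.range_comp _ _]
      exact (hW w).image Sum.inr_injective.injOn
  obtain ⟨g, hg⟩ := exists_smul_notMem_of_orbit_infinite
    ((F.finite_toSet.image Sum.inl).union (Set.finite_singleton (Sum.inr w₀)))
    ((D.finite_toSet.image Sum.inl).union (S.finite_toSet.image Sum.inr)) fun p _ => horbit p
  exact ⟨g, fun f hf hfD => hg (.inl f) (.inl ⟨f, hf, rfl⟩) (.inl ⟨_, hfD, rfl⟩),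
    fun hw => hg (.inr w₀) (.inr rfl) (.inr ⟨_, hw, rfl⟩)⟩

end Avoidance

theorem exists_finset_card_disjoint_image {W : Type} [DecidableEq W] {P : W → Prop}
    (hP : ∀ S : Finset W, ∃ u ∉ S, P u) {σ : W → W} (hσ : Function.Injective σ)
    (hfix : {w | σ w = w}.Finite) (k : ℕ) :
    ∃ U : Finset W, U.card = k ∧ (∀ u ∈ U, P u) ∧ Disjoint U (U.image σ) := by
  induction k with
  | zero => exact ⟨∅, rfl, by simp, by simp⟩
  | succ k ih =>
    obtain ⟨U, hcard, hPU, hdisj⟩ := ih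
    obtain ⟨u, hu, hPu⟩ := hP (U ∪ U.image σ ∪ U.preimage σ hσ.injOn ∪ hfix.toFinset)
    simp only [Finset.mem_union, Finset.mem_preimage, Set.Finite.mem_toFinset,
      Set.mem_ofPred_eq, not_or] at hu
    obtain ⟨⟨⟨huU, huσU⟩, hσuU⟩, hσu⟩ := hu
    refine ⟨insert u U, by rw [Finset.card_insert_of_notMem huU, hcard], ?_, ?_⟩
    · simpa [hPu] using hPU
    · rw [Finset.image_insert, Finset.disjoint_insert_left, Finset.disjoint_insert_right,
        Finset.mem_insert, not_or]
      exact ⟨⟨Ne.symm hσu, huσU⟩, hσuU, hdisj⟩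

theorem _root_.MeasureTheory.MeasurePreserving.measure_preimage_symmDiff_le {α : Type*}
    [MeasurableSpace α] {m : Measure α} {T : α → α} (hT : MeasurePreserving T m m)
    {C E : Set α} (hC : T ⁻¹' C = C) (hEC : NullMeasurableSet (E ∆ C) m) :
    m ((T ⁻¹' E) ∆ E) ≤ 2 * m (E ∆ C) := by
  have hTEC : (T ⁻¹' E) ∆ C = T ⁻¹' (E ∆ C) := by rw [Set.preimage_symmDiff, hC]
  calc m ((T ⁻¹' E) ∆ E) ≤ m ((T ⁻¹' E) ∆ C) + m (C ∆ E) := measure_symmDiff_le _ _ _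
    _ = 2 * m (E ∆ C) := by rw [hTEC, hT.measure_preimage hEC, symmDiff_comm C, two_mul]

section ShiftedAgreement

open Measure

variable [Group Γ] {W : Type} [MulAction Γ V] [MulAction Γ W] [MeasurableSpace X]
  [MeasurableSpace Y] {μ : Measure X} {ν : Measure Y} [IsProbabilityMeasure μ]
  {θ : (V → X) → (W → Y)} {T : (V → X) → (V → X)}

theorem exists_finset_measure_preimage_symmDiff_le
    (hθ : MeasurePreserving θ (infinitePi fun _ => μ) (infinitePi fun _ => ν))
    (hθeq : ∀ γ : Γ, ∀ᵐ x ∂infinitePi fun _ => μ, θ (shiftS γ x) = shiftS γ (θ x))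
    (hT : MeasurePreserving T (infinitePi fun _ => μ) (infinitePi fun _ => μ)) {D : Set V}
    (hTD : ∀ x, ∀ v ∉ D, T x v = x v) {A : Set Y} (hA : MeasurableSet A) (w₀ : W)
    {ε : ℝ≥0∞} (hε : 0 < ε) :
    ∃ F : Finset V, ∀ g : Γ, (∀ f ∈ F, g • f ∉ D) →
      infinitePi (fun _ => μ) ((T ⁻¹' {x | θ x (g • w₀) ∈ A}) ∆ {x | θ x (g • w₀) ∈ A}) ≤
        2 * ε := by
  have hE : ∀ w, MeasurableSet {x | θ x w ∈ A} := fun w => hθ.measurable (measurable_pi_apply w hA)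
  obtain ⟨C, hC, hCE⟩ := exists_measure_symmDiff_lt_of_generateFrom_isSetRing
    (μ := infinitePi fun _ => μ) isSetRing_measurableCylinders
    ⟨{Set.univ}, Set.countable_singleton _,
      Set.singleton_subset_iff.2 (univ_mem_measurableCylinders _), by simp⟩
    generateFrom_measurableCylinders.symm (hE w₀) hε
  obtain ⟨F, S, hS, rfl⟩ := (mem_measurableCylinders C).1 hC
  refine ⟨F, fun g hg => ?_⟩
  -- the cylinder moved by `g` only sees coordinates in `g • F`, which `T` does not touch
  have hTC : T ⁻¹' (shiftS g⁻¹ ⁻¹' cylinder F S) = shiftS g⁻¹ ⁻¹' cylinder F S := by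
    have hrestrict : ∀ x, F.restrict (shiftS g⁻¹ (T x)) = F.restrict (shiftS g⁻¹ x) :=
      fun x => funext fun f => by simp [shiftS, hTD x _ (hg f f.2)]
    ext x
    simp only [Set.mem_preimage, mem_cylinder, hrestrict]
  have hEg : {x | θ x (g • w₀) ∈ A} =ᵐ[infinitePi fun _ => μ]
      shiftS g⁻¹ ⁻¹' {x | θ x w₀ ∈ A} := by
    filter_upwards [hθeq g⁻¹] with x hx
    change (θ x (g • w₀) ∈ A) = (θ (shiftS g⁻¹ x) w₀ ∈ A)
    simp [hx, shiftS]
  have hS' := (measurePreserving_shiftS (μ := μ) g⁻¹).measurable (hS.cylinder F)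
  calc _ ≤ 2 * infinitePi (fun _ => μ)
          ({x | θ x (g • w₀) ∈ A} ∆ (shiftS g⁻¹ ⁻¹' cylinder F S)) :=
        hT.measure_preimage_symmDiff_le hTC ((hE _).symmDiff hS').nullMeasurableSet
    _ = 2 * infinitePi (fun _ => μ) (cylinder F S ∆ {x | θ x w₀ ∈ A}) := by
        rw [measure_congr (hEg.symmDiff (ae_eq_refl (shiftS g⁻¹ ⁻¹' cylinder F S))),
          ← Set.preimage_symmDiff, (measurePreserving_shiftS g⁻¹).measure_preimage
            ((hE w₀).symmDiff (hS.cylinder F)).nullMeasurableSet, symmDiff_comm]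
    _ ≤ 2 * ε := by gcongr

theorem measure_setOf_forall_notMem_iff_smul_le_pow_add [IsProbabilityMeasure ν]
    [DecidableEq W] (hV : ∀ v : V, (MulAction.orbit Γ v).Infinite)
    (hW : ∀ w : W, (MulAction.orbit Γ w).Infinite)
    (hθ : MeasurePreserving θ (infinitePi fun _ => μ) (infinitePi fun _ => ν))
    (hθeq : ∀ γ : Γ, ∀ᵐ x ∂infinitePi fun _ => μ, θ (shiftS γ x) = shiftS γ (θ x))
    (hT : MeasurePreserving T (infinitePi fun _ => μ) (infinitePi fun _ => μ)) {D : Finset V}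
    (hTD : ∀ x, ∀ v ∉ D, T x v = x v) {γ : Γ} (hγ : {w : W | γ • w = w}.Finite)
    {A : Set Y} (hA : MeasurableSet A) (s : Finset W) (w₀ : W) (k : ℕ) {ε : ℝ≥0∞}
    (hε : 0 < ε) :
    infinitePi (fun _ => μ) {x | ∀ w ∉ s, θ (T x) w ∈ A ↔ θ x (γ⁻¹ • w) ∈ A} ≤
      infinitePi (fun _ : Bool => ν) {z | z true ∈ A ↔ z false ∈ A} ^ k + k * (2 * ε) := by
  let E : W → Set (V → X) := fun w => {x | θ x w ∈ A}
  obtain ⟨F, hF⟩ := exists_finset_measure_preimage_symmDiff_le hθ hθeq hT hTD hA w₀ hε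
  obtain ⟨U, hUcard, hUgood, hUdisj⟩ := exists_finset_card_disjoint_image
    (P := fun u => u ∉ s ∧ ∃ g : Γ, (∀ f ∈ F, g • f ∉ D) ∧ u = g • w₀)
    (fun S => by
      obtain ⟨g, hgF, hgS⟩ := exists_smul_forall_notMem_and_smul_notMem hV hW F D w₀ (S ∪ s)
      rw [Finset.mem_union, not_or] at hgS
      exact ⟨g • w₀, hgS.1, hgS.2, g, hgF, rfl⟩)
    (MulAction.injective γ⁻¹) (hγ.subset fun w hw => (inv_smul_eq_iff.1 hw).symm) k
  have hsub : {x | ∀ w ∉ s, θ (T x) w ∈ A ↔ θ x (γ⁻¹ • w) ∈ A} ⊆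
      θ ⁻¹' {y | ∀ u ∈ U, y u ∈ A ↔ y (γ⁻¹ • u) ∈ A} ∪ ⋃ u ∈ U, (T ⁻¹' E u) ∆ E u := by
    intro x hx
    by_contra hnot
    simp only [Set.mem_union, Set.mem_preimage, Set.mem_iUnion, not_or, not_exists] at hnot
    refine hnot.1 fun u hu => ?_
    have hTu : θ (T x) u ∈ A ↔ θ x u ∈ A := by
      have := hnot.2 u hu
      simp only [Set.mem_symmDiff, Set.mem_preimage, Set.mem_ofPred_eq, E] at this
      tauto
    exact hTu.symm.trans (hx u (hUgood u hu).1)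
  have hmeas : MeasurableSet {y : W → Y | ∀ u ∈ U, y u ∈ A ↔ y (γ⁻¹ • u) ∈ A} := by
    simpa only [Set.ofPred_forall] using
      Finset.measurableSet_biInter U fun u _ => Measurable.setOf (by fun_prop)
  calc _ ≤ _ := measure_mono hsub
    _ ≤ infinitePi (fun _ => μ) (θ ⁻¹' {y | ∀ u ∈ U, y u ∈ A ↔ y (γ⁻¹ • u) ∈ A}) +
          ∑ u ∈ U, infinitePi (fun _ => μ) ((T ⁻¹' E u) ∆ E u) :=
        (measure_union_le _ _).trans (add_le_add le_rfl (measure_biUnion_finset_le _ _))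
    _ ≤ _ := by
        rw [hθ.measure_preimage hmeas.nullMeasurableSet,
          infinitePi_setOf_forall_mem_iff_mem (MulAction.injective γ⁻¹) hUdisj hA, hUcard]
        refine add_le_add le_rfl ((Finset.sum_le_card_nsmul _ _ _ fun u hu => ?_).trans_eq
          (by rw [hUcard, nsmul_eq_mul]))
        obtain ⟨-, g, hgF, rfl⟩ := hUgood u hu
        exact hF g hgF

theorem measure_setOf_forall_notMem_iff_smul_eq_zero [IsProbabilityMeasure ν] [Nonempty W]
    (hV : ∀ v : V, (MulAction.orbit Γ v).Infinite)
    (hW : ∀ w : W, (MulAction.orbit Γ w).Infinite)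
    (hθ : MeasurePreserving θ (infinitePi fun _ => μ) (infinitePi fun _ => ν))
    (hθeq : ∀ γ : Γ, ∀ᵐ x ∂infinitePi fun _ => μ, θ (shiftS γ x) = shiftS γ (θ x))
    (hT : MeasurePreserving T (infinitePi fun _ => μ) (infinitePi fun _ => μ)) {D : Finset V}
    (hTD : ∀ x, ∀ v ∉ D, T x v = x v) {γ : Γ} (hγ : {w : W | γ • w = w}.Finite)
    {A : Set Y} (hA : MeasurableSet A) (hA₀ : ν A ≠ 0) (hA₁ : ν Aᶜ ≠ 0) (s : Finset W) :
    infinitePi (fun _ => μ) {x | ∀ w ∉ s, θ (T x) w ∈ A ↔ θ x (γ⁻¹ • w) ∈ A} = 0 := by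
  classical
  obtain ⟨w₀⟩ := ‹Nonempty W›
  have hpow : ∀ k : ℕ, infinitePi (fun _ => μ) {x | ∀ w ∉ s, θ (T x) w ∈ A ↔ θ x (γ⁻¹ • w) ∈ A}
      ≤ infinitePi (fun _ : Bool => ν) {z | z true ∈ A ↔ z false ∈ A} ^ k := by
    refine fun k => ENNReal.le_of_forall_pos_le_add fun η hη _ => ?_
    have hε : 0 < (η : ℝ≥0∞) / (2 * k) :=
      ENNReal.div_pos (by exact_mod_cast hη.ne') (by simp [ENNReal.mul_eq_top])
    refine (measure_setOf_forall_notMem_iff_smul_le_pow_add hV hW hθ hθeq hT hTD hγ hA s w₀ k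
      hε).trans (add_le_add le_rfl ?_)
    rw [← mul_assoc, mul_comm (k : ℝ≥0∞)]
    exact ENNReal.mul_div_le
  exact le_antisymm (ge_of_tendsto' (ENNReal.tendsto_pow_atTop_nhds_zero_of_lt_one
    (infinitePi_setOf_iff_mem_lt_one hA hA₀ hA₁)) hpow) bot_le

theorem ae_forall_exists_notMem_not_iff_smul [IsProbabilityMeasure ν] [Countable Γ]
    [Countable W] [Nonempty W] (hV : ∀ v : V, (MulAction.orbit Γ v).Infinite)
    (hW : ∀ w : W, (MulAction.orbit Γ w).Infinite)
    (hfix : ∀ γ : Γ, γ ≠ 1 → {w : W | γ • w = w}.Finite)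
    (hθ : MeasurePreserving θ (infinitePi fun _ => μ) (infinitePi fun _ => ν))
    (hθeq : ∀ γ : Γ, ∀ᵐ x ∂infinitePi fun _ => μ, θ (shiftS γ x) = shiftS γ (θ x))
    (hT : MeasurePreserving T (infinitePi fun _ => μ) (infinitePi fun _ => μ)) {D : Finset V}
    (hTD : ∀ x, ∀ v ∉ D, T x v = x v) {A : Set Y} (hA : MeasurableSet A) (hA₀ : ν A ≠ 0)
    (hA₁ : ν Aᶜ ≠ 0) :
    ∀ᵐ x ∂infinitePi fun _ => μ, ∀ γ : Γ, γ ≠ 1 → ∀ s : Finset W,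
      ∃ w ∉ s, ¬(θ (T x) w ∈ A ↔ θ x (γ⁻¹ • w) ∈ A) := by
  refine ae_all_iff.2 fun γ => ?_
  rcases eq_or_ne γ 1 with rfl | hγ
  · exact ae_of_all _ fun x h => absurd rfl h
  filter_upwards [ae_all_iff.2 fun s => measure_eq_zero_iff_ae_notMem.1
    (measure_setOf_forall_notMem_iff_smul_eq_zero hV hW hθ hθeq hT hTD (hfix γ hγ) hA hA₀ hA₁ s)]
    with x hx _ s
  simpa using hx s

end ShiftedAgreement

theorem equivariant_map_sends_dsum_orbits_into_dsum_orbits_general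
    (Γ V W B C X Y : Type) [Group Γ] [Countable Γ] [Countable V] [Countable W]
    [MulAction Γ V] [MulAction Γ W] [Group B] [Countable B] [Group C]
    (hV : ∀ v : V, (MulAction.orbit Γ v).Infinite)
    (hW : ∀ w : W, (MulAction.orbit Γ w).Infinite)
    (hWfix : ∀ γ : Γ, γ ≠ 1 → {w : W | γ • w = w}.Finite)
    [MeasurableSpace X] [MeasurableSpace Y] [StandardBorelSpace Y]
    (μ : Measure X) (ν : Measure Y) [IsProbabilityMeasure μ] [IsProbabilityMeasure ν]
    (b : B → X → X) (c : C → Y → Y) (hb : IsPmpAction b μ) (hc : IsPmpAction c ν)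
    (μV : Measure (V → X)) (νW : Measure (W → Y))
    (hμV : IsProductMeasure μ μV) (hνW : IsProductMeasure ν νW)
    (θ : (V → X) → (W → Y)) (hθmp : MeasurePreserving θ μV νW)
    (hθeq : ∀ γ : Γ, ∀ᵐ x ∂μV, θ (shiftS γ x) = shiftS γ (θ x))
    (hθorb : ∀ᵐ x ∂μV, ∀ g : pwreath V B Γ, ∃ h : pwreath W C Γ,
      θ (wreathSmul b g x) = wreathSmul c h (θ x)) :
    ∀ᵐ x ∂μV, ∀ d : dsum V B, ∃ e : dsum W C,
      θ (dsumSmul b d x) = dsumSmul c e (θ x) := by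
  obtain rfl := hμV.eq_infinitePi
  obtain rfl := hνW.eq_infinitePi
  refine ae_all_iff.2 fun d => ?_
  have hT := measurePreserving_dsumSmul hb.2.2.2 d
  rcases isEmpty_or_nonempty W with hWe | hWne
  · exact ae_of_all _ fun x => ⟨1, Subsingleton.elim _ _⟩
  by_cases h01 : ∀ A, MeasurableSet A → ν A = 0 ∨ ν A = 1
  · have : IsZeroOneMeasure ν := ⟨h01⟩
    filter_upwards [ae_comp_eq_of_isZeroOneMeasure hθmp hT] with x hx
    exact ⟨1, by rw [dsumSmul_one hc.2.1]; exact hx⟩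
  push Not at h01
  obtain ⟨A, hA, hA₀, hA₁⟩ := h01
  have hTD : ∀ x, ∀ v ∉ (dsum.finite_mulSupport d).toFinset, dsumSmul b d x v = x v :=
    fun x v hv => dsumSmul_apply_of_notMem hb.2.1 (by rwa [Set.Finite.mem_toFinset] at hv) x
  filter_upwards [hθorb, ae_forall_exists_notMem_not_iff_smul hV hW hWfix hθmp hθeq hT hTD hA
    hA₀ (by rwa [ne_eq, prob_compl_eq_zero_iff hA])] with x horb hfar
  obtain ⟨h, hh⟩ := horb (SemidirectProduct.inl d)
  rw [wreathSmul_inl] at hh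
  by_cases hγ : h.right = 1
  · exact ⟨h.left, by rw [hh, wreathSmul_of_right_eq_one hγ]⟩
  obtain ⟨w, hw, hne⟩ := hfar h.right hγ (dsum.finite_mulSupport h.left).toFinset
  refine absurd ?_ hne
  rw [hh, wreathSmul_apply_of_notMem hc.2.1 (by rwa [Set.Finite.mem_toFinset] at hw)]

/-- Let `Γ` act on countable sets `V` and `W` with all orbits infinite,
every nonidentity element fixing only finitely many points of `W`. If `θ` is a measure
preserving `Γ`-equivariant map sending `B ≀_V Γ`-orbits into `C ≀_W Γ`-orbits, then `θ`
sends `⊕_V B`-orbits into `⊕_W C`-orbits. -/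
theorem equivariant_map_sends_dsum_orbits_into_dsum_orbits
    (Γ V W B C X Y : Type) [Group Γ] [Countable Γ] [Countable V] [Countable W]
    [MulAction Γ V] [MulAction Γ W] [Group B] [Countable B] [Group C] [Countable C]
    (hV : ∀ v : V, (MulAction.orbit Γ v).Infinite)
    (hW : ∀ w : W, (MulAction.orbit Γ w).Infinite)
    (hWfix : ∀ γ : Γ, γ ≠ 1 → {w : W | γ • w = w}.Finite)
    [MeasurableSpace X] [MeasurableSpace Y] [StandardBorelSpace X] [StandardBorelSpace Y]
    (μ : Measure X) (ν : Measure Y) [IsProbabilityMeasure μ] [IsProbabilityMeasure ν]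
    (b : B → X → X) (c : C → Y → Y) (hb : IsPmpAction b μ) (hc : IsPmpAction c ν)
    (μV : Measure (V → X)) (νW : Measure (W → Y))
    (hμV : IsProductMeasure μ μV) (hνW : IsProductMeasure ν νW)
    (θ : (V → X) → (W → Y)) (hθmp : MeasurePreserving θ μV νW)
    (hθeq : ∀ γ : Γ, ∀ᵐ x ∂μV, θ (shiftS γ x) = shiftS γ (θ x))
    (hθorb : ∀ᵐ x ∂μV, ∀ g : pwreath V B Γ, ∃ h : pwreath W C Γ,
      θ (wreathSmul b g x) = wreathSmul c h (θ x)) :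
    ∀ᵐ x ∂μV, ∀ d : dsum V B, ∃ e : dsum W C,
      θ (dsumSmul b d x) = dsumSmul c e (θ x) :=
  equivariant_map_sends_dsum_orbits_into_dsum_orbits_general Γ V W B C X Y hV hW hWfix μ ν b c hb hc
    μV νW hμV hνW θ hθmp hθeq hθorb

end OEW
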